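/- Let α ∈ ℝ with α > 0, β ∈ ℂ, μ ∈ ℂ with |μ| = 1, and let V be an 𝔰𝔳-module that is unitary for the conjugate-linear anti-involution θ⁺_{α,β,μ} and is a highest weight module with highest weight vector v (so v generates V, is a simultaneous eigenvector for L₀, M₀, c, and L_n·v = M_n·v = 0 for n ≥ 1, Y_{n+1/2}·v = 0 for n ≥ 0). Then M_n·w = 0 and Y_{n+1/2}·w = 0 for all n ∈ ℤ and all w ∈ V. -/

import Mathlib

/-!
If `B` is a contravariant positive definite form, then `⁅θ x, ⁅x, u⁆⁆ = 0` forces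
`B ⁅x, u⁆ ⁅x, u⁆ = B u ⁅θ x, ⁅x, u⁆⁆ = 0`, hence `⁅x, u⁆ = 0`. Here `θ⁺` sends `M_n` to a
multiple of `M_{-n}` and `Y_{n+1/2}` to a multiple of `Y_{-n-1/2}`; since `⁅M_{-n}, M_n⁆ = 0`
and `⁅Y_{-n-1/2}, Y_{n+1/2}⁆ ∈ ℂ M_0`, this shows that all `M_n` and `Y_{n+1/2}` kill the
highest weight vector `v` (for `M_0` write `M_0 = ⁅M_{-1}, L_1⁆`). The common kernel of the
`M_n` and `Y_{n+1/2}` is a submodule because they span an ideal, and it contains the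
generator `v`.
-/

/-- Index type for the distinguished basis of the Schrödinger–Virasoro algebra.
`Y n` stands for the basis element `Y_{n+1/2}`. -/
inductive SVIndex : Type
  | L : ℤ → SVIndex
  | M : ℤ → SVIndex
  | Y : ℤ → SVIndex
  | c : SVIndex

/-- A realization of the Schrödinger–Virasoro Lie algebra: a complex Lie algebra `sv`
with distinguished elements `L n`, `M n`, `Y n` (representing `Y_{n+1/2}`) and `c`
which form a basis and satisfy the defining bracket relations. -/
structure SVAlgebra (sv : Type*) [LieRing sv] [LieAlgebra ℂ sv] where
  L : ℤ → sv
  M : ℤ → sv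
  Y : ℤ → sv
  c : sv
  indep : LinearIndependent ℂ (fun i : SVIndex =>
    match i with
    | .L n => L n
    | .M n => M n
    | .Y n => Y n
    | .c => c)
  span_top : Submodule.span ℂ (Set.range (fun i : SVIndex =>
    match i with
    | .L n => L n
    | .M n => M n
    | .Y n => Y n
    | .c => c)) = ⊤
  bracket_LL : ∀ m n : ℤ, ⁅L m, L n⁆ =
    ((n : ℂ) - (m : ℂ)) • L (m + n)
      + (if m + n = 0 then ((m : ℂ) ^ 3 - (m : ℂ)) / 12 else 0) • c
  bracket_LM : ∀ m n : ℤ, ⁅L m, M n⁆ = (n : ℂ) • M (m + n)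
  bracket_LY : ∀ m n : ℤ, ⁅L m, Y n⁆ = ((n : ℂ) + (1 - (m : ℂ)) / 2) • Y (m + n)
  bracket_YY : ∀ m n : ℤ, ⁅Y m, Y n⁆ = ((n : ℂ) - (m : ℂ)) • M (m + n + 1)
  bracket_MM : ∀ m n : ℤ, ⁅M m, M n⁆ = 0
  bracket_MY : ∀ m n : ℤ, ⁅M m, Y n⁆ = 0
  bracket_c : ∀ x : sv, ⁅x, c⁆ = 0

/-- A conjugate-linear anti-involution of a complex Lie algebra. -/
structure ConjAntiInvolution (sv : Type*) [LieRing sv] [LieAlgebra ℂ sv] where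
  toFun : sv → sv
  map_add' : ∀ x y : sv, toFun (x + y) = toFun x + toFun y
  map_smul' : ∀ (a : ℂ) (x : sv), toFun (a • x) = (starRingEnd ℂ a) • toFun x
  map_bracket' : ∀ x y : sv, toFun ⁅x, y⁆ = ⁅toFun y, toFun x⁆
  invol' : ∀ x : sv, toFun (toFun x) = x

variable {sv : Type*} [LieRing sv] [LieAlgebra ℂ sv]

/-- The simultaneous eigenspace of `L 0`, `M 0`, `c` with eigenvalue triple `χ`. -/
def svWeightSpace (A : SVAlgebra sv) (V : Type*) [AddCommGroup V] [Module ℂ V]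
    [LieRingModule sv V] [LieModule ℂ sv V] (χ : ℂ × ℂ × ℂ) : Submodule ℂ V :=
  Module.End.eigenspace (LieModule.toEnd ℂ sv V (A.L 0)) χ.1 ⊓
    Module.End.eigenspace (LieModule.toEnd ℂ sv V (A.M 0)) χ.2.1 ⊓
    Module.End.eigenspace (LieModule.toEnd ℂ sv V A.c) χ.2.2

/-- `V` is a weight module: it is the (direct) sum of the simultaneous eigenspaces
of `L 0`, `M 0`, `c`, each of which is finite-dimensional. -/
def IsWeightModule (A : SVAlgebra sv) (V : Type*) [AddCommGroup V] [Module ℂ V]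
    [LieRingModule sv V] [LieModule ℂ sv V] : Prop :=
  (∀ χ : ℂ × ℂ × ℂ, FiniteDimensional ℂ (svWeightSpace A V χ)) ∧
    (⨆ χ : ℂ × ℂ × ℂ, svWeightSpace A V χ) = ⊤

/-- `B` is a positive-definite Hermitian sesquilinear form on `V` that is
contravariant with respect to the map `θ`. -/
def IsUnitaryForm (θ : sv → sv) (V : Type*) [AddCommGroup V] [Module ℂ V]
    [LieRingModule sv V] (B : V → V → ℂ) : Prop :=
  (∀ u v w : V, B (u + v) w = B u w + B v w) ∧
  (∀ (a : ℂ) (u v : V), B (a • u) v = a * B u v) ∧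
  (∀ u v : V, B u v = starRingEnd ℂ (B v u)) ∧
  (∀ v : V, v ≠ 0 → 0 < (B v v).re) ∧
  (∀ (x : sv) (u v : V), B ⁅x, u⁆ v = B u ⁅θ x, v⁆)

/-- `V` is unitary for the conjugate-linear anti-involution `θ`. -/
def IsUnitaryFor (θ : sv → sv) (V : Type*) [AddCommGroup V] [Module ℂ V]
    [LieRingModule sv V] : Prop :=
  ∃ B : V → V → ℂ, IsUnitaryForm θ V B

/-- The defining formulas of the anti-involution `θ⁺_{α,β,μ}` (with a chosen
square root `s` of `μ`): recall `A.Y n` stands for `Y_{n+1/2}`, so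
`θ(Y_{n+1/2}) = s·α^{n+1/2}·Y_{-n-1/2}`. -/
def IsThetaPlus (A : SVAlgebra sv) (θ : sv → sv) (α : ℝ) (β μ s : ℂ) : Prop :=
  (∀ n : ℤ, θ (A.L n) = ((α : ℂ) ^ n) • A.L (-n) +
      ((((n : ℂ) + 1) / 2) * (α : ℂ) ^ (n - 1) * β +
        (((n : ℂ) - 1) / 2) * (α : ℂ) ^ (n - 1) * μ * starRingEnd ℂ β) • A.M (-n)) ∧
  θ A.c = A.c ∧
  (∀ n : ℤ, θ (A.M n) = (μ * (α : ℂ) ^ n) • A.M (-n)) ∧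
  (∀ n : ℤ, θ (A.Y n) = (s * (α : ℂ) ^ n * (Real.sqrt α : ℂ)) • A.Y (-n - 1))

variable {V : Type*} [AddCommGroup V] [Module ℂ V] [LieRingModule sv V] [LieModule ℂ sv V]

namespace IsUnitaryFor

variable {θ : sv → sv}

theorem lie_eq_zero_of_lie_lie_eq_zero (hunit : IsUnitaryFor θ V) {x y : sv} {a : ℂ}
    (hθx : θ x = a • y) {u : V} (h : ⁅y, ⁅x, u⁆⁆ = 0) : ⁅x, u⁆ = 0 := by
  obtain ⟨B, -, hsmul, hherm, hpos, hcontra⟩ := hunit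
  by_contra hne
  have hB : B ⁅x, u⁆ ⁅x, u⁆ = 0 := by
    rw [hcontra, hθx, smul_lie, h, smul_zero, hherm, ← zero_smul ℂ u, hsmul, zero_mul, map_zero]
  simpa [hB] using hpos _ hne

end IsUnitaryFor

namespace SVAlgebra

variable (A : SVAlgebra sv)

def basisFun : SVIndex → sv
  | .L n => A.L n
  | .M n => A.M n
  | .Y n => A.Y n
  | .c => A.c

theorem lie_lie_eq_zero_of_forall_basisFun {y : sv} {w : V}
    (h : ∀ i, ⁅⁅y, A.basisFun i⁆, w⁆ = 0) (x : sv) : ⁅⁅y, x⁆, w⁆ = 0 := by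
  have hspan : Submodule.span ℂ (Set.range A.basisFun) = ⊤ := A.span_top
  have hx : x ∈ Submodule.span ℂ (Set.range A.basisFun) := hspan ▸ Submodule.mem_top
  induction hx using Submodule.span_induction with
  | mem _ hx => obtain ⟨i, rfl⟩ := hx; exact h i
  | zero => rw [lie_zero, zero_lie]
  | add _ _ _ _ hx hy => rw [lie_add, add_lie, hx, hy, add_zero]
  | smul a _ _ hx => rw [lie_smul, smul_lie, hx, smul_zero]

theorem lie_lie_M_eq_zero {w : V} (hw : ∀ k, ⁅A.M k, w⁆ = 0) (n : ℤ) (x : sv) :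
    ⁅⁅A.M n, x⁆, w⁆ = 0 := by
  refine A.lie_lie_eq_zero_of_forall_basisFun (fun i => ?_) x
  cases i with
  | L m => rw [basisFun, ← lie_skew, A.bracket_LM, neg_lie, smul_lie, hw, smul_zero, neg_zero]
  | M m => rw [basisFun, A.bracket_MM, zero_lie]
  | Y m => rw [basisFun, A.bracket_MY, zero_lie]
  | c => rw [basisFun, A.bracket_c, zero_lie]

theorem lie_lie_Y_eq_zero {w : V} (hw : ∀ k, ⁅A.M k, w⁆ = 0 ∧ ⁅A.Y k, w⁆ = 0) (n : ℤ)
    (x : sv) : ⁅⁅A.Y n, x⁆, w⁆ = 0 := by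
  refine A.lie_lie_eq_zero_of_forall_basisFun (fun i => ?_) x
  cases i with
  | L m => rw [basisFun, ← lie_skew, A.bracket_LY, neg_lie, smul_lie, (hw _).2, smul_zero,
      neg_zero]
  | M m => rw [basisFun, ← lie_skew, A.bracket_MY, neg_zero, zero_lie]
  | Y m => rw [basisFun, A.bracket_YY, smul_lie, (hw _).1, smul_zero]
  | c => rw [basisFun, A.bracket_c, zero_lie]

def annihilatorMY : LieSubmodule ℂ sv V where
  carrier := {w | ∀ k, ⁅A.M k, w⁆ = 0 ∧ ⁅A.Y k, w⁆ = 0}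
  add_mem' ha hb k :=
    ⟨by rw [lie_add, (ha k).1, (hb k).1, add_zero],
      by rw [lie_add, (ha k).2, (hb k).2, add_zero]⟩
  zero_mem' _ := ⟨lie_zero _, lie_zero _⟩
  smul_mem' _ _ hw k :=
    ⟨by rw [lie_smul, (hw k).1, smul_zero], by rw [lie_smul, (hw k).2, smul_zero]⟩
  lie_mem hw k :=
    ⟨by rw [leibniz_lie, A.lie_lie_M_eq_zero (fun k => (hw k).1), (hw k).1, lie_zero, add_zero],
      by rw [leibniz_lie, A.lie_lie_Y_eq_zero hw, (hw k).2, lie_zero, add_zero]⟩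

variable {θ : sv → sv} {v : V}

theorem lie_M_eq_zero_of_isUnitaryFor (hunit : IsUnitaryFor θ V)
    (hθM : ∀ n, ∃ a : ℂ, θ (A.M n) = a • A.M (-n)) (hL : ⁅A.L 1, v⁆ = 0)
    (hM : ∀ n : ℤ, 1 ≤ n → ⁅A.M n, v⁆ = 0) (n : ℤ) : ⁅A.M n, v⁆ = 0 := by
  have hneg : ∀ n : ℤ, 1 ≤ n → ⁅A.M (-n), v⁆ = 0 := fun n hn => by
    obtain ⟨a, ha⟩ := hθM (-n)
    rw [neg_neg] at ha
    refine hunit.lie_eq_zero_of_lie_lie_eq_zero ha ?_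
    rw [leibniz_lie, A.bracket_MM, hM n hn, zero_lie, lie_zero, add_zero]
  rcases lt_trichotomy n 0 with h | rfl | h
  · simpa using hneg (-n) (by omega)
  · have hM0 : A.M 0 = ⁅A.M (-1), A.L 1⁆ := by
      rw [← lie_skew, A.bracket_LM]
      norm_num
    rw [hM0, lie_lie, hL, hneg 1 le_rfl, lie_zero, lie_zero, sub_zero]
  · exact hM n h

theorem lie_Y_eq_zero_of_isUnitaryFor (hunit : IsUnitaryFor θ V)
    (hθY : ∀ n, ∃ a : ℂ, θ (A.Y n) = a • A.Y (-n - 1)) (hM0 : ⁅A.M 0, v⁆ = 0)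
    (hY : ∀ n : ℤ, 0 ≤ n → ⁅A.Y n, v⁆ = 0) (n : ℤ) : ⁅A.Y n, v⁆ = 0 := by
  rcases le_or_gt 0 n with h | h
  · exact hY n h
  obtain ⟨a, ha⟩ := hθY n
  refine hunit.lie_eq_zero_of_lie_lie_eq_zero ha ?_
  rw [leibniz_lie, A.bracket_YY, hY (-n - 1) (by omega), lie_zero, add_zero,
    show -n - 1 + n + 1 = 0 by omega, smul_lie, hM0, smul_zero]

end SVAlgebra

theorem sv_unitary_highest_weight_MY_trivial_general (A : SVAlgebra sv)
    (α : ℝ) (β μ s : ℂ)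
    (θ : ConjAntiInvolution sv) (hθ : IsThetaPlus A θ.toFun α β μ s)
    (hunit : IsUnitaryFor (V := V) θ.toFun)
    (v : V) (hgen : LieSubmodule.lieSpan ℂ sv {v} = ⊤)
    (hann : ∀ n : ℤ, 1 ≤ n → ⁅A.L n, v⁆ = 0 ∧ ⁅A.M n, v⁆ = 0)
    (hannY : ∀ n : ℤ, 0 ≤ n → ⁅A.Y n, v⁆ = 0) :
    ∀ (n : ℤ) (w : V), ⁅A.M n, w⁆ = 0 ∧ ⁅A.Y n, w⁆ = 0 := by
  obtain ⟨-, -, hθM, hθY⟩ := hθ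
  have hM := A.lie_M_eq_zero_of_isUnitaryFor hunit (fun n => ⟨_, hθM n⟩) (hann 1 le_rfl).1
    (fun n hn => (hann n hn).2)
  have hY := A.lie_Y_eq_zero_of_isUnitaryFor hunit (fun n => ⟨_, hθY n⟩) (hM 0) hannY
  have hv : v ∈ A.annihilatorMY := fun k => ⟨hM k, hY k⟩
  have htop : A.annihilatorMY = ⊤ :=
    eq_top_iff.2 (hgen ▸ LieSubmodule.lieSpan_le.2 (Set.singleton_subset_iff.2 hv))
  intro n w
  exact (htop ▸ LieSubmodule.mem_top w : w ∈ A.annihilatorMY) n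

/-- On a highest weight `𝔰𝔳`-module that is unitary for `θ⁺_{α,β,μ}` with `α > 0`,
the elements `M_n` and `Y_{n+1/2}` act as zero. -/
theorem sv_unitary_highest_weight_MY_trivial (A : SVAlgebra sv)
    (α : ℝ) (hα : 0 < α) (β μ s : ℂ) (hμ : ‖μ‖ = 1) (hs : s ^ 2 = μ)
    (θ : ConjAntiInvolution sv) (hθ : IsThetaPlus A θ.toFun α β μ s)
    (hunit : IsUnitaryFor (V := V) θ.toFun)
    (v : V) (hgen : LieSubmodule.lieSpan ℂ sv {v} = ⊤)
    (heig : ∃ a b d : ℂ, ⁅A.L 0, v⁆ = a • v ∧ ⁅A.M 0, v⁆ = b • v ∧ ⁅A.c, v⁆ = d • v)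
    (hann : ∀ n : ℤ, 1 ≤ n → ⁅A.L n, v⁆ = 0 ∧ ⁅A.M n, v⁆ = 0)
    (hannY : ∀ n : ℤ, 0 ≤ n → ⁅A.Y n, v⁆ = 0) :
    ∀ (n : ℤ) (w : V), ⁅A.M n, w⁆ = 0 ∧ ⁅A.Y n, w⁆ = 0 :=
  sv_unitary_highest_weight_MY_trivial_general A α β μ s θ hθ hunit v hgen hann hannY
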